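/- For integers m ≥ 1, n ≥ 1 and any parameter μ ∈ ℝ, the generalised Laguerre polynomials satisfy the two discrete equations: (i) T_{m,n+1}^{(μ−1)}(z) · T_{m,n−1}^{(μ+1)}(z) = T_{m+1,n}^{(μ−1)}(z) · T_{m−1,n}^{(μ+1)}(z) − (T_{m,n}^{(μ)}(z))², and (ii) T_{m,n+1}^{(μ−1)}(z) · T_{m+1,n−1}^{(μ+1)}(z) = T_{m+1,n}^{(μ−1)}(z) · T_{m,n}^{(μ+1)}(z) − T_{m+1,n}^{(μ)}(z) · T_{m,n}^{(μ)}(z). -/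

import Mathlib

noncomputable section

open Finset

/-- Generalized binomial coefficient `C(x, k)` for real `x`. -/
def genBinom (x : ℝ) (k : ℕ) : ℝ :=
  (∏ i ∈ Finset.range k, (x - i)) / (Nat.factorial k)

/-- Associated Laguerre polynomial `L_n^{(α)}(z)`, with the convention `L_n^{(α)} = 0` for `n < 0`. -/
def lagL (n : ℤ) (α : ℝ) : ℝ → ℝ := fun z =>
  if n < 0 then 0
  else ∑ k ∈ Finset.range (n.toNat + 1),
    (-1 : ℝ) ^ k * genBinom ((n : ℝ) + α) (n.toNat - k) * z ^ k / (Nat.factorial k)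

/-- Generalised Laguerre polynomial
`T_{m,n}^{(μ)}(z) = det[(d/dz)^{j+k} L_{m+n}^{(μ+1)}(z)]_{j,k=0}^{n-1}`
(with `T_{m,0}^{(μ)} = 1`, the empty determinant). -/
def genLag (m : ℤ) (n : ℕ) (μ : ℝ) : ℝ → ℝ := fun z =>
  Matrix.det (Matrix.of fun j k : Fin n =>
    iteratedDeriv ((j : ℕ) + (k : ℕ)) (lagL (m + n) (μ + 1)) z)

/-- Wronskian `Wr(f_1, …, f_r)(z) = det[(d/dz)^{j-1} f_k(z)]`. -/
def wronskian {r : ℕ} (f : Fin r → ℝ → ℝ) : ℝ → ℝ := fun z =>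
  Matrix.det (Matrix.of fun j k : Fin r => iteratedDeriv (j : ℕ) (f k) z)

/-- The constant `c_{m,n} = (-1)^{n(2m+1+n)/2} ∏_{j=1}^n (j-1)!/(m+j)!`. -/
def cmn (m n : ℕ) : ℝ :=
  (-1 : ℝ) ^ (n * (2 * m + 1 + n) / 2) *
    ∏ j ∈ Finset.range n, (Nat.factorial j : ℝ) / (Nat.factorial (m + j + 1))

/-- `τ_{m,n}^{(μ)}(z) = det[(z d/dz)^{j+k} L_{m+n}^{(n+μ)}(z)]_{j,k=0}^{n-1}`. -/
def tauP (m : ℤ) (n : ℕ) (μ : ℝ) : ℝ → ℝ := fun z =>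
  Matrix.det (Matrix.of fun j k : Fin n =>
    ((fun (g : ℝ → ℝ) => fun t => t * deriv g t)^[(j : ℕ) + (k : ℕ)]
      (lagL (m + n) ((n : ℝ) + μ))) z)

/-- Hirota bilinear operator `D_z(f • g) = f' g - f g'`. -/
def hirota (f g : ℝ → ℝ) (z : ℝ) : ℝ := deriv f z * g z - f z * deriv g z

/-- Probabilists' Hermite polynomial `He_n` as a real function. -/
def He (n : ℕ) : ℝ → ℝ := fun z => Polynomial.aeval z (Polynomial.hermite n)

/-- The fifth Painlevé equation (with `δ = -1/2`) for `w` with parameters `(a, b, c)`,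
holding at the point `z`. -/
def PV (a b c : ℝ) (w : ℝ → ℝ) (z : ℝ) : Prop :=
  iteratedDeriv 2 w z =
    (1 / (2 * w z) + 1 / (w z - 1)) * (deriv w z) ^ 2
      - (1 / z) * deriv w z
      + (w z - 1) ^ 2 * (a * (w z) ^ 2 + b) / (z ^ 2 * w z)
      + c * w z / z
      - w z * (w z + 1) / (2 * (w z - 1))

/-- The Jimbo–Miwa–Okamoto `σ`-equation `S_V` with parameters `(ν₁, ν₂, ν₃)`,
holding at the point `z`. -/
def SV (ν₁ ν₂ ν₃ : ℝ) (σ : ℝ → ℝ) (z : ℝ) : Prop :=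
  (z * iteratedDeriv 2 σ z) ^ 2 =
    (2 * (deriv σ z) ^ 2 + (ν₁ + ν₂ + ν₃ - z) * deriv σ z + σ z) ^ 2
      - 4 * deriv σ z * (deriv σ z + ν₁) * (deriv σ z + ν₂) * (deriv σ z + ν₃)

/-!
Both identities are instances of the Desnanot–Jacobi identity
`det M · det M₁ₙ¹ⁿ = det M₁¹ · det Mₙⁿ - det M₁ⁿ · det Mₙ¹`, which follows from Jacobi's theorem on
the minors of the adjugate, proved for the generic matrix, where `det M` can be cancelled.

Since `(d/dz) L_N^{(α)} = -L_{N-1}^{(α+1)}`, the matrix defining `T_{m,n}^{(μ)}` has entries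
`(-1)^{j+k} ℓ(j+k)` with `ℓ(i) = L_{m+n-i}^{(μ+1+i)}`. The signs cancel, so `T_{m,n}^{(μ)}` is the
Hankel determinant of `ℓ`, and the shifts of `ℓ` are again sequences of this form. Identity (i) is
Desnanot–Jacobi for the Hankel matrix of size `n + 1`. For (ii), adding to each row but the first
the row above it turns the rows `j ≥ 1` into shifts of `i ↦ L_{N-i}^{(α+1+i)}`, by the contiguity
relation `L_N^{(α+1)} = L_N^{(α)} + L_{N-1}^{(α+1)}`; Desnanot–Jacobi for this matrix is (ii).
-/

open scoped Nat

namespace Matrix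

section Jacobi

variable {m n R : Type*} [Fintype m] [Fintype n] [DecidableEq m] [DecidableEq n] [CommRing R]

theorem det_mul_det_toBlocks₁₁_adjugate (N : Matrix (m ⊕ n) (m ⊕ n) R) :
    N.det * N.adjugate.toBlocks₁₁.det = N.det ^ Fintype.card m * N.toBlocks₂₂.det := by
  obtain ⟨A, B, C, D, rfl⟩ : ∃ A B C D, N = fromBlocks A B C D :=
    ⟨_, _, _, _, (fromBlocks_toBlocks N).symm⟩
  obtain ⟨P, P', Q, Q', hadj⟩ :
      ∃ P P' Q Q', (fromBlocks A B C D).adjugate = fromBlocks P P' Q Q' :=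
    ⟨_, _, _, _, (fromBlocks_toBlocks _).symm⟩
  have hinv := mul_adjugate (fromBlocks A B C D)
  rw [hadj, fromBlocks_multiply, ← fromBlocks_one, fromBlocks_smul] at hinv
  obtain ⟨hP, -, hQ, -⟩ := fromBlocks_inj.mp hinv
  have hX : fromBlocks A B C D * fromBlocks P 0 Q 1
      = fromBlocks ((fromBlocks A B C D).det • 1) B 0 D := by
    rw [fromBlocks_multiply, hP, hQ]
    simp
  have hdet := congrArg det hX
  rw [det_mul, det_fromBlocks_zero₁₂, det_fromBlocks_zero₂₁, det_one, mul_one, det_smul,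
    det_one, mul_one] at hdet
  simpa [hadj] using hdet

theorem det_toBlocks₁₁_adjugate (N : Matrix (m ⊕ n) (m ⊕ n) R) (hm : Fintype.card m ≠ 0) :
    N.adjugate.toBlocks₁₁.det = N.det ^ (Fintype.card m - 1) * N.toBlocks₂₂.det := by
  let X := mvPolynomialX (m ⊕ n) (m ⊕ n) ℤ
  let ev := (MvPolynomial.aeval (R := ℤ) fun p : (m ⊕ n) × (m ⊕ n) => N p.1 p.2).toRingHom
  suffices hX : X.adjugate.toBlocks₁₁.det = X.det ^ (Fintype.card m - 1) * X.toBlocks₂₂.det by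
    have hN : ev.mapMatrix X = N := mvPolynomialX_mapMatrix_aeval ℤ N
    have := congrArg ev hX
    rw [map_mul, map_pow, RingHom.map_det, RingHom.map_det, RingHom.map_det] at this
    rwa [← hN, ← RingHom.map_adjugate]
  apply mul_left_cancel₀ (det_mvPolynomialX_ne_zero (m ⊕ n) ℤ)
  rw [det_mul_det_toBlocks₁₁_adjugate, ← mul_assoc, ← pow_succ',
    Nat.sub_add_cancel (Nat.pos_of_ne_zero hm)]

theorem det_of_neg_one_pow_add_mul (p : n → ℕ) (A : Matrix n n R) :
    (of fun i j => (-1) ^ (p i + p j) * A i j).det = A.det := by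
  have h : (of fun i j => (-1) ^ (p i + p j) * A i j)
      = of fun i j => (-1 : R) ^ p j * (of fun i j => (-1) ^ p i * A i j) i j := by
    ext i j
    simp only [of_apply, pow_add]
    ring
  rw [h, det_mul_row, det_mul_column, ← mul_assoc, ← prod_mul_distrib]
  simp [← mul_pow]

def finTwoSumEquiv (r : ℕ) : Fin 2 ⊕ Fin r ≃ Fin (r + 2) :=
  Equiv.ofBijective (Sum.elim ![0, Fin.last (r + 1)] fun i => i.succ.castSucc) <| by
    refine (Fintype.bijective_iff_injective_and_card _).mpr ⟨?_, by simp [add_comm]⟩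
    rintro (a | a) (b | b) h
    · fin_cases a <;> fin_cases b <;> simp_all [Fin.ext_iff]
    · fin_cases a <;> simp [Fin.ext_iff] at h
      omega
    · fin_cases b <;> simp [Fin.ext_iff] at h
      omega
    · simpa [Fin.ext_iff] using h

theorem det_mul_det_submatrix_succ_castSucc {r : ℕ} (M : Matrix (Fin (r + 2)) (Fin (r + 2)) R) :
    M.det * (M.submatrix (fun i : Fin r => i.succ.castSucc) fun i => i.succ.castSucc).det
      = (M.submatrix Fin.succ Fin.succ).det * (M.submatrix Fin.castSucc Fin.castSucc).det
        - (M.submatrix Fin.succ Fin.castSucc).det * (M.submatrix Fin.castSucc Fin.succ).det := by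
  have h := det_toBlocks₁₁_adjugate (M.submatrix (finTwoSumEquiv r) (finTwoSumEquiv r)) (by simp)
  have h₂₂ : (M.submatrix (finTwoSumEquiv r) (finTwoSumEquiv r)).toBlocks₂₂
      = M.submatrix (fun i : Fin r => i.succ.castSucc) fun i => i.succ.castSucc := rfl
  rw [adjugate_submatrix_equiv_self, det_submatrix_equiv_self, h₂₂] at h
  simp only [toBlocks₁₁, finTwoSumEquiv, Equiv.coe_ofBijective, submatrix_apply, Sum.elim_inl,
    adjugate_fin_succ_eq_det_submatrix, det_fin_two, of_apply, cons_val_zero, cons_val_one,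
    cons_val_fin_one, Fin.val_zero, Fin.val_last, Fin.succAbove_zero, Fin.succAbove_last,
    Fintype.card_fin] at h
  have hsign : ((-1 : R) ^ (r + 1)) ^ 2 = 1 := by
    rw [← pow_mul, mul_comm, pow_mul, neg_one_sq, one_pow]
  linear_combination -h + ((M.submatrix Fin.succ Fin.succ).det
      * (M.submatrix Fin.castSucc Fin.castSucc).det
    - (M.submatrix Fin.succ Fin.castSucc).det * (M.submatrix Fin.castSucc Fin.succ).det) * hsign

end Jacobi

section Hankel

variable {α R : Type*} [CommRing R]

def hankel (s : ℕ) (G : ℕ → α) : Matrix (Fin s) (Fin s) α := of fun j k => G (j + k)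

theorem submatrix_hankel {s t : ℕ} (G : ℕ → α) (f g : Fin t → Fin s) (c : ℕ)
    (h : ∀ j k, (f j : ℕ) + g k = j + k + c) :
    (hankel s G).submatrix f g = hankel t fun i => G (i + c) := by
  ext j k
  simp [hankel, h]

theorem det_hankel_mul_det_hankel (G : ℕ → R) (s : ℕ) :
    (hankel (s + 2) G).det * (hankel s fun i => G (i + 2)).det
      = (hankel (s + 1) fun i => G (i + 2)).det * (hankel (s + 1) G).det
        - (hankel (s + 1) fun i => G (i + 1)).det ^ 2 := by
  have h := det_mul_det_submatrix_succ_castSucc (hankel (s + 2) G)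
  rw [submatrix_hankel G _ _ 2 fun _ _ => by simp only [Fin.val_succ, Fin.val_castSucc]; ring,
    submatrix_hankel G _ _ 2 fun _ _ => by simp only [Fin.val_succ]; ring,
    submatrix_hankel G _ _ 0 fun _ _ => by simp only [Fin.val_castSucc, add_zero],
    submatrix_hankel G _ _ 1 fun _ _ => by simp only [Fin.val_succ, Fin.val_castSucc]; ring,
    submatrix_hankel G _ _ 1 fun _ _ => by simp only [Fin.val_succ, Fin.val_castSucc]; ring] at h
  simpa [sq] using h

theorem det_hankel_eq_det_of_add (G F : ℕ → R) (hF : ∀ i, F i = G i + G (i + 1)) (s : ℕ) :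
    (hankel s G).det = (of fun j k : Fin s => if (j : ℕ) = 0 then G k else F (j - 1 + k)).det := by
  let B : Matrix (Fin s) (Fin s) R :=
    of fun i j => if (j : ℕ) = i ∨ (j : ℕ) + 1 = i then 1 else 0
  have hB : B.det = 1 := by
    rw [det_of_isLowerTriangular B fun i j (hij : i < j) => by
      simp only [B, of_apply, Fin.lt_def] at hij ⊢
      rw [if_neg (by omega)]]
    simp [B]
  have hBH : B * hankel s G = of fun j k : Fin s => if (j : ℕ) = 0 then G k else F (j - 1 + k) := by
    ext i k
    simp only [mul_apply, B, hankel, of_apply]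
    rw [Fin.sum_univ_eq_sum_range (fun j => (if j = i ∨ j + 1 = i then (1 : R) else 0) * G (j + k))]
    rcases i with ⟨_ | p, hi⟩
    · simp [sum_ite_eq', hi]
    · rw [sum_eq_add_of_mem p (p + 1) (by simp only [mem_range]; omega) (by simpa using hi) (by omega)
        fun c _ hc => by
          simp only [Nat.add_right_cancel_iff, ite_mul, one_mul, zero_mul, ite_eq_right_iff]
          omega]
      simp [hF, add_right_comm]
  rw [← hBH, det_mul, hB, one_mul]

theorem det_hankel_mul_det_hankel_of_add (G F : ℕ → R) (hF : ∀ i, F i = G i + G (i + 1))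
    (s : ℕ) :
    (hankel (s + 2) G).det * (hankel s fun i => F (i + 1)).det
      = (hankel (s + 1) fun i => F (i + 1)).det * (hankel (s + 1) G).det
        - (hankel (s + 1) F).det * (hankel (s + 1) fun i => G (i + 1)).det := by
  let M : Matrix (Fin (s + 2)) (Fin (s + 2)) R :=
    of fun j k => if (j : ℕ) = 0 then G k else F (j - 1 + k)
  have hM : M.det = (hankel (s + 2) G).det := (det_hankel_eq_det_of_add G F hF _).symm
  have hM₁₁ : (M.submatrix Fin.castSucc Fin.castSucc).det = (hankel (s + 1) G).det :=
    (det_hankel_eq_det_of_add G F hF _).symm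
  have hM₁₂ : (M.submatrix Fin.castSucc Fin.succ).det = (hankel (s + 1) fun i => G (i + 1)).det :=
    (det_hankel_eq_det_of_add _ _ (fun i => hF (i + 1)) _).symm
  have hM₂₁ : M.submatrix Fin.succ Fin.castSucc = hankel (s + 1) F := by
    ext j k
    simp [M, hankel]
  have hM₂₂ : M.submatrix Fin.succ Fin.succ = hankel (s + 1) fun i => F (i + 1) := by
    ext j k
    simp [M, hankel, add_assoc]
  have hMint : M.submatrix (fun i : Fin s => i.succ.castSucc) (fun i => i.succ.castSucc)
      = hankel s fun i => F (i + 1) := by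
    ext j k
    simp [M, hankel, add_assoc]
  have h := det_mul_det_submatrix_succ_castSucc M
  rwa [hM, hM₁₁, hM₁₂, hM₂₁, hM₂₂, hMint] at h

end Hankel

end Matrix

open Matrix

theorem genBinom_zero (x : ℝ) : genBinom x 0 = 1 := by simp [genBinom]

theorem genBinom_succ_succ (x : ℝ) (k : ℕ) :
    genBinom (x + 1) (k + 1) = genBinom x (k + 1) + genBinom x k := by
  have h : ∏ i ∈ range (k + 1), (x + 1 - i) = (∏ i ∈ range k, (x - i)) * (x + 1) := by
    rw [prod_range_succ']
    push_cast
    simp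
  rw [genBinom, genBinom, genBinom, h, prod_range_succ, Nat.factorial_succ]
  push_cast
  field_simp
  ring

theorem hasDerivAt_sum_range_mul_pow_div_factorial (a : ℕ → ℝ) (N : ℕ) (z : ℝ) :
    HasDerivAt (fun z => ∑ k ∈ range (N + 1), a k * z ^ k / k !)
      (∑ k ∈ range N, a (k + 1) * z ^ k / k !) z := by
  induction N with
  | zero => simpa using hasDerivAt_const z (a 0)
  | succ N ih =>
    have hterm : HasDerivAt (fun z => a (N + 1) * z ^ (N + 1) / (N + 1)!)
        (a (N + 1) * z ^ N / N !) z := by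
      refine (((hasDerivAt_pow (N + 1) z).const_mul (a (N + 1))).div_const _).congr_deriv ?_
      push_cast [Nat.factorial_succ]
      field_simp
    simp only [sum_range_succ _ (N + 1)]
    rw [sum_range_succ _ N]
    exact ih.fun_add hterm

theorem lagL_of_neg {n : ℤ} (hn : n < 0) (α : ℝ) : lagL n α = 0 := by
  funext z; simp [lagL, hn]

theorem lagL_natCast (n : ℕ) (α : ℝ) :
    lagL n α = fun z => ∑ k ∈ range (n + 1), (-1) ^ k * genBinom (n + α) (n - k) * z ^ k / k ! := by
  funext z; simp [lagL]

theorem hasDerivAt_lagL (n : ℤ) (α z : ℝ) :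
    HasDerivAt (lagL n α) (-lagL (n - 1) (α + 1) z) z := by
  rcases lt_or_ge n 0 with hn | hn
  · rw [lagL_of_neg hn, lagL_of_neg (by omega)]
    simp
  lift n to ℕ using hn
  rw [lagL_natCast]
  convert hasDerivAt_sum_range_mul_pow_div_factorial _ n z using 1
  rcases n with _ | n
  · simp [lagL_of_neg]
  · simp only [Nat.cast_add, Nat.cast_one, add_sub_cancel_right, lagL_natCast,
      ← sum_neg_distrib]
    refine sum_congr rfl fun k _ => ?_
    rw [Nat.add_sub_add_right, pow_succ]
    ring_nf

theorem iteratedDeriv_lagL (i : ℕ) (n : ℤ) (α z : ℝ) :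
    iteratedDeriv i (lagL n α) z = (-1) ^ i * lagL (n - i) (α + i) z := by
  induction i generalizing n α with
  | zero => simp
  | succ i ih =>
    have hderiv : deriv (lagL n α) = -lagL (n - 1) (α + 1) :=
      funext fun z => (hasDerivAt_lagL n α z).deriv
    rw [iteratedDeriv_succ', hderiv, iteratedDeriv_neg, ih, pow_succ]
    push_cast
    ring_nf

theorem lagL_add_one (n : ℤ) (α z : ℝ) :
    lagL n (α + 1) z = lagL n α z + lagL (n - 1) (α + 1) z := by
  rcases lt_or_ge n 0 with hn | hn
  · simp [lagL_of_neg hn, lagL_of_neg (show n - 1 < 0 by omega)]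
  lift n to ℕ using hn
  rcases n with _ | n
  · rw [lagL_natCast, lagL_natCast, lagL_of_neg (by simp)]
    simp [genBinom_zero]
  · rw [show ((n + 1 : ℕ) : ℤ) - 1 = n by push_cast; ring]
    simp only [lagL_natCast]
    rw [sum_range_succ, sum_range_succ _ (n + 1), Nat.sub_self, genBinom_zero, genBinom_zero,
      add_right_comm, ← sum_add_distrib]
    congr 1
    refine sum_congr rfl fun k hk => ?_
    rw [Nat.succ_sub (by simpa [Nat.lt_succ_iff] using hk)]
    rw [show ((n + 1 : ℕ) : ℝ) + (α + 1) = (n + 1 + α) + 1 by push_cast; ring, genBinom_succ_succ,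
      show (n : ℝ) + (α + 1) = n + 1 + α by ring]
    push_cast
    ring

theorem genLag_eq_det_hankel (m : ℤ) (n : ℕ) (μ z : ℝ) :
    genLag m n μ z = (hankel n fun i => lagL (m + n - i) (μ + 1 + i) z).det := by
  rw [genLag]
  simp only [iteratedDeriv_lagL]
  exact det_of_neg_one_pow_add_mul (fun i : Fin n => (i : ℕ)) _

theorem genLag_discrete_equations_general (m n : ℕ) (hn : 1 ≤ n) (μ : ℝ) (z : ℝ) :
    genLag (m : ℤ) (n + 1) (μ - 1) z * genLag (m : ℤ) (n - 1) (μ + 1) z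
        = genLag ((m : ℤ) + 1) n (μ - 1) z * genLag ((m : ℤ) - 1) n (μ + 1) z
            - (genLag (m : ℤ) n μ z) ^ 2
      ∧ genLag (m : ℤ) (n + 1) (μ - 1) z * genLag ((m : ℤ) + 1) (n - 1) (μ + 1) z
        = genLag ((m : ℤ) + 1) n (μ - 1) z * genLag (m : ℤ) n (μ + 1) z
            - genLag ((m : ℤ) + 1) n μ z * genLag (m : ℤ) n μ z := by
  obtain ⟨s, rfl⟩ : ∃ s, n = s + 1 := ⟨n - 1, by omega⟩
  let ℓ : ℝ → ℕ → ℝ := fun α i => lagL ((m : ℤ) + s + 2 - i) (α + i) z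
  have hℓ : ∀ i, ℓ (μ + 1) i = ℓ μ i + ℓ μ (i + 1) := fun i => by
    simp only [ℓ]
    rw [show μ + 1 + (i : ℝ) = μ + i + 1 by ring, lagL_add_one]
    push_cast
    ring_nf
  have h₁ := det_hankel_mul_det_hankel (ℓ μ) s
  have h₂ := det_hankel_mul_det_hankel_of_add (ℓ μ) (ℓ (μ + 1)) hℓ s
  simp only [genLag_eq_det_hankel, ℓ] at h₁ h₂ ⊢
  -- all factors are Hankel determinants of `i ↦ lagL (a - i) (b + i) z`; normalise `a` and `b`
  push_cast at h₁ h₂ ⊢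
  ring_nf at h₁ h₂ ⊢
  exact ⟨h₁, h₂⟩

/-- two discrete equations for the generalised Laguerre polynomials. -/
theorem genLag_discrete_equations (m n : ℕ) (hm : 1 ≤ m) (hn : 1 ≤ n) (μ : ℝ) (z : ℝ) :
    genLag (m : ℤ) (n + 1) (μ - 1) z * genLag (m : ℤ) (n - 1) (μ + 1) z
        = genLag ((m : ℤ) + 1) n (μ - 1) z * genLag ((m : ℤ) - 1) n (μ + 1) z
            - (genLag (m : ℤ) n μ z) ^ 2
      ∧ genLag (m : ℤ) (n + 1) (μ - 1) z * genLag ((m : ℤ) + 1) (n - 1) (μ + 1) z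
        = genLag ((m : ℤ) + 1) n (μ - 1) z * genLag (m : ℤ) n (μ + 1) z
            - genLag ((m : ℤ) + 1) n μ z * genLag (m : ℤ) n μ z :=
  genLag_discrete_equations_general m n hn μ z
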